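/- (Monotonicity of Y in the ambiguity parameter, high risk aversion.) Let T > 0, γ > 1, β > 0, and suppose for each parameter η ≥ 0 the function Y_η : [0,T] → ℝ is the C¹ solution to −Y_η′(t) = g(Y_η(t)) + ( A(t) + ((1−γ)/(2γ)) Σⱼ (θⱼ⁺)²/(γ + ηⱼ) ) Y_η(t), Y_η(T) = β^{1/γ}, with A continuous, g continuously differentiable, Y_η(t) > 0, and the ηⱼ fixed except for ηᵢ = η. Assume Y depends smoothly on η. Then ∂Y_η(t)/∂η ≥ 0 for all t: the solution Y is nondecreasing in each ambiguity-aversion parameter ηᵢ when γ > 1 (and nonincreasing when 0 < γ < 1). -/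

import Mathlib

/-!
For each `η`, `Y η` solves the backward equation `-y' = g(y) + c_η(t) y` with the same
terminal value, and since `1 - γ < 0` the coefficient `c_η(t)` increases with `η`. Because
`Y η₂ > 0`, it is therefore a supersolution of the equation for `η₁ ≤ η₂`, and the comparison
principle for backward ODEs with locally Lipschitz right-hand side gives `Y η₁ ≤ Y η₂` on
`[0, T]`. A function that is monotone on `[0, ∞)` has nonnegative derivative wherever it is
differentiable.
-/

open Set Real
open scoped NNReal

theorem nonneg_of_hasDerivAt_le_mul_abs {a b K : ℝ} {w w' : ℝ → ℝ}
    (hw : ∀ t ∈ Icc a b, HasDerivAt w (w' t) t) (hw' : ∀ t ∈ Icc a b, w' t ≤ K * |w t|)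
    (hb : 0 ≤ w b) : ∀ t ∈ Icc a b, 0 ≤ w t := by
  -- Reflect time and fence `-w` by the barrier `ε e^{(K+1)(b-t)}`, then let `ε → 0`.
  have barrier : ∀ ε > 0, ∀ t ∈ Icc a b, -w t ≤ ε * exp ((K + 1) * (b - t)) := by
    intro ε hε
    have hrefl : ∀ s ∈ Icc (-b) (-a), -s ∈ Icc a b := fun s hs =>
      ⟨by linarith [hs.2], by linarith [hs.1]⟩
    have hf : ∀ s ∈ Icc (-b) (-a), HasDerivAt (fun s => -w (-s)) (w' (-s)) s := fun s hs =>
      ((hw (-s) (hrefl s hs)).comp s (hasDerivAt_neg s)).neg.congr_deriv (by ring)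
    have hB : ∀ s, HasDerivAt (fun s => ε * exp ((K + 1) * (s + b)))
        ((K + 1) * (ε * exp ((K + 1) * (s + b)))) s := fun s =>
      ((((hasDerivAt_id' s).add_const b).const_mul (K + 1)).exp.const_mul ε).congr_deriv
        (by ring)
    have fence := image_le_of_deriv_right_lt_deriv_boundary
      (fun s hs => (hf s hs).continuousAt.continuousWithinAt)
      (fun s hs => (hf s (Ico_subset_Icc_self hs)).hasDerivWithinAt)
      (by simp only [neg_neg, neg_add_cancel, mul_zero, exp_zero, mul_one]; linarith) hB
      (fun s hs hfB => by
        have hpos : 0 < ε * exp ((K + 1) * (s + b)) := by positivity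
        have habs : |w (-s)| = ε * exp ((K + 1) * (s + b)) := by
          rw [abs_of_neg (by linarith), ← hfB]
        have := hw' (-s) (hrefl s (Ico_subset_Icc_self hs))
        rw [habs] at this
        linarith)
    intro t ht
    simpa [sub_eq_neg_add] using fence (x := -t) ⟨by linarith [ht.2], by linarith [ht.1]⟩
  intro t ht
  by_contra! hneg
  have hE : 0 < exp ((K + 1) * (b - t)) := exp_pos _
  have := barrier (-w t / (2 * exp ((K + 1) * (b - t)))) (div_pos (by linarith) (by positivity))
    t ht
  rw [div_mul_eq_mul_div, mul_div_mul_right _ _ hE.ne'] at this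
  linarith

theorem le_of_backward_ode_supersolution {a b : ℝ} {K : ℝ≥0} {s : Set ℝ}
    {F : ℝ → ℝ → ℝ} {u v v' : ℝ → ℝ} (hF : ∀ t ∈ Icc a b, LipschitzOnWith K (F t) s)
    (hu : ∀ t ∈ Icc a b, HasDerivAt u (F t (u t)) t) (hus : MapsTo u (Icc a b) s)
    (hv : ∀ t ∈ Icc a b, HasDerivAt v (v' t) t) (hv' : ∀ t ∈ Icc a b, v' t ≤ F t (v t))
    (hvs : MapsTo v (Icc a b) s) (hb : u b ≤ v b) :
    ∀ t ∈ Icc a b, u t ≤ v t := by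
  have hbound : ∀ t ∈ Icc a b, v' t - F t (u t) ≤ K * |(v - u) t| := fun t ht => calc
    v' t - F t (u t) ≤ |F t (v t) - F t (u t)| :=
      (sub_le_sub_right (hv' t ht) _).trans (le_abs_self _)
    _ ≤ K * |v t - u t| := by
      simpa only [Real.dist_eq] using (hF t ht).dist_le_mul (v t) (hvs ht) (u t) (hus ht)
  intro t ht
  exact sub_nonneg.1 <| nonneg_of_hasDerivAt_le_mul_abs (fun t ht => (hv t ht).sub (hu t ht))
    hbound (sub_nonneg.2 hb) t ht

theorem le_of_backward_ode_coeff_le {a b : ℝ} {g p q u v : ℝ → ℝ} (hg : ContDiff ℝ 1 g)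
    (hp : ContinuousOn p (Icc a b))
    (hu : ∀ t ∈ Icc a b, HasDerivAt u (-(g (u t) + p t * u t)) t)
    (hv : ∀ t ∈ Icc a b, HasDerivAt v (-(g (v t) + q t * v t)) t)
    (hpq : ∀ t ∈ Icc a b, p t ≤ q t) (hv₀ : ∀ t ∈ Icc a b, 0 ≤ v t) (hb : u b ≤ v b) :
    ∀ t ∈ Icc a b, u t ≤ v t := by
  obtain ⟨Ru, hRu⟩ := isCompact_Icc.exists_bound_of_continuousOn
    fun t ht => (hu t ht).continuousAt.continuousWithinAt
  obtain ⟨Rv, hRv⟩ := isCompact_Icc.exists_bound_of_continuousOn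
    fun t ht => (hv t ht).continuousAt.continuousWithinAt
  set s := Metric.closedBall (0 : ℝ) (max Ru Rv)
  obtain ⟨L, hL⟩ := hg.contDiffOn.exists_lipschitzOnWith one_ne_zero (convex_closedBall 0 _)
    (isCompact_closedBall 0 _)
  obtain ⟨C, hC⟩ := isCompact_Icc.exists_bound_of_continuousOn hp
  have hF : ∀ t ∈ Icc a b, LipschitzOnWith (L + C.toNNReal) (fun y => -(g y + p t * y)) s :=
    fun t ht => (hL.add ((lipschitzWith_smul (β := ℝ) (p t)).weaken
      (by rw [← norm_toNNReal]; exact Real.toNNReal_le_toNNReal (hC t ht))).lipschitzOnWith).neg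
  refine le_of_backward_ode_supersolution hF hu
    (fun t ht => mem_closedBall_zero_iff.2 ((hRu t ht).trans (le_max_left _ _))) hv (fun t ht => ?_)
    (fun t ht => mem_closedBall_zero_iff.2 ((hRv t ht).trans (le_max_right _ _))) hb
  linarith [mul_le_mul_of_nonneg_right (hpq t ht) (hv₀ t ht)]

theorem antitoneOn_sum_div_add_update {ι : Type*} [Fintype ι] [DecidableEq ι] {γ : ℝ}
    (hγ : 0 < γ) {c : ι → ℝ} (hc : ∀ j, 0 ≤ c j) (η : ι → ℝ) (i : ι) :
    AntitoneOn (fun x => ∑ j, c j / (γ + Function.update η i x j)) (Ici 0) := by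
  intro x hx y _ hxy
  refine Finset.sum_le_sum fun j _ => ?_
  rcases eq_or_ne j i with rfl | hj
  · simp only [Function.update_self]
    exact div_le_div_of_nonneg_left (hc j) (by linarith [mem_Ici.1 hx]) (by linarith)
  · simp only [Function.update_of_ne hj, le_refl]

theorem stmt13_general (n : ℕ) (T γ β : ℝ) (hγ : 1 < γ)
    (A : ℝ → ℝ) (hA : Continuous A) (g : ℝ → ℝ) (hg : ContDiff ℝ 1 g)
    (θ : Fin n → ℝ) (ηv : Fin n → ℝ) (i : Fin n)
    (Y : ℝ → ℝ → ℝ)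
    (hODE : ∀ η : ℝ, 0 ≤ η → ∀ t ∈ Set.Icc (0:ℝ) T,
      HasDerivAt (Y η)
        (-(g (Y η t) +
          (A t + ((1 - γ) / (2 * γ)) *
            ∑ j, (max (θ j) 0) ^ 2 / (γ + Function.update ηv i η j)) * Y η t)) t)
    (hterm : ∀ η : ℝ, 0 ≤ η → Y η T = β ^ (1/γ : ℝ))
    (hpos : ∀ η : ℝ, 0 ≤ η → ∀ t ∈ Set.Icc (0:ℝ) T, 0 < Y η t)
    (hsmooth : ∀ t ∈ Set.Icc (0:ℝ) T, ∀ η : ℝ, 0 ≤ η →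
      DifferentiableAt ℝ (fun e => Y e t) η) :
    ∀ η : ℝ, 0 ≤ η → ∀ t ∈ Set.Icc (0:ℝ) T,
      0 ≤ deriv (fun e => Y e t) η := by
  have hk : (1 - γ) / (2 * γ) ≤ 0 := div_nonpos_of_nonpos_of_nonneg (by linarith) (by linarith)
  have hsum := antitoneOn_sum_div_add_update (by linarith : 0 < γ)
    (fun j => sq_nonneg (max (θ j) 0)) ηv i
  intro η hη t ht
  have hmono : MonotoneOn (fun e => Y e t) (Ici 0) := by
    intro η₁ h₁ η₂ h₂ h₁₂
    refine le_of_backward_ode_coeff_le hg ?_ (hODE η₁ h₁) (hODE η₂ h₂)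
      (fun s _ => ?_) (fun s hs => (hpos η₂ h₂ s hs).le) (by rw [hterm η₁ h₁, hterm η₂ h₂])
      t ht
    · exact (hA.add continuous_const).continuousOn
    · exact add_le_add_right (mul_le_mul_of_nonpos_left (hsum h₁ h₂ h₁₂) hk) (A s)
  rw [← (hsmooth t ht η hη).derivWithin (uniqueDiffOn_Ici 0 η hη)]
  exact hmono.derivWithin_nonneg

/-- Monotonicity of the value-function factor `Y` in an ambiguity-aversion parameter,
high risk aversion case.  For `γ > 1`, if for each `η ≥ 0` the function `Y η` solves
`−Y′(t) = g(Y(t)) + (A(t) + ((1−γ)/(2γ)) ∑ⱼ (θⱼ⁺)²/(γ + ηⱼ)) Y(t)` with `Y(T) = β^{1/γ}`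
and `Y > 0`, where only the `i`-th parameter `ηᵢ = η` varies, and `Y` depends
differentiably on `η`, then `∂Y(t)/∂η ≥ 0`: `Y` is nondecreasing in `ηᵢ`. -/
theorem stmt13 (n : ℕ) (T γ β : ℝ) (hT : 0 < T) (hγ : 1 < γ) (hβ : 0 < β)
    (A : ℝ → ℝ) (hA : Continuous A) (g : ℝ → ℝ) (hg : ContDiff ℝ 1 g)
    (θ : Fin n → ℝ) (ηv : Fin n → ℝ) (hηv : ∀ j, 0 ≤ ηv j) (i : Fin n)
    (Y : ℝ → ℝ → ℝ)
    (hODE : ∀ η : ℝ, 0 ≤ η → ∀ t ∈ Set.Icc (0:ℝ) T,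
      HasDerivAt (Y η)
        (-(g (Y η t) +
          (A t + ((1 - γ) / (2 * γ)) *
            ∑ j, (max (θ j) 0) ^ 2 / (γ + Function.update ηv i η j)) * Y η t)) t)
    (hterm : ∀ η : ℝ, 0 ≤ η → Y η T = β ^ (1/γ : ℝ))
    (hpos : ∀ η : ℝ, 0 ≤ η → ∀ t ∈ Set.Icc (0:ℝ) T, 0 < Y η t)
    (hsmooth : ∀ t ∈ Set.Icc (0:ℝ) T, ∀ η : ℝ, 0 ≤ η →
      DifferentiableAt ℝ (fun e => Y e t) η) :
    ∀ η : ℝ, 0 ≤ η → ∀ t ∈ Set.Icc (0:ℝ) T,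
      0 ≤ deriv (fun e => Y e t) η :=
  stmt13_general n T γ β hγ A hA g hg θ ηv i Y hODE hterm hpos hsmooth
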